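/- arXiv:2005.05521 — 3 statements merged into one kernel-verified Lean document; each statement's English description precedes it below -/
import Mathlib

section
/- Fix N ≥ 1, an index i, and a cost profile c ∈ ℝ^N with c_j > 0 for all j; let c_tot = Σ_j c_j. Suppose f(t) denotes the value of the allocation function when the i-th coordinate is t and the others are fixed, f is differentiable at c_i with 0 ≤ f'(c_i) ≤ 1/c_tot and 0 ≤ f(c_i) ≤ 1. Define p_i(t) = f(t) · t / (t + Σ_{j≠i} c_j). Then p_i'(c_i) ≤ 1/c_tot. -/
open Finset

/-! The success probability `p_i(t) = f(t) t / (t + s)`, with `s` the total cost of the other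
miners, has derivative `(f'(t) t (t + s) + f(t) s) / (t + s)²`. The bound `f' ≤ 1 / (t + s)`
controls the first summand of the numerator by `t`, and `f ≤ 1` the second by `s`. -/

theorem hasDerivAt_mul_id_div_add_const {g : ℝ → ℝ} {g' x s : ℝ} (hg : HasDerivAt g g' x)
    (hxs : x + s ≠ 0) :
    HasDerivAt (fun t => g t * t / (t + s)) ((g' * x * (x + s) + g x * s) / (x + s) ^ 2) x := by
  have hquot := (hg.fun_mul (hasDerivAt_id' x)).fun_div ((hasDerivAt_id' x).add_const s) hxs
  exact hquot.congr_deriv (by ring)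

theorem deriv_mul_id_div_add_const_le {g : ℝ → ℝ} {x s : ℝ} (hg : DifferentiableAt ℝ g x)
    (hx : 0 ≤ x) (hs : 0 ≤ s) (hxs : 0 < x + s)
    (hg' : deriv g x ≤ 1 / (x + s)) (hg1 : g x ≤ 1) :
    deriv (fun t => g t * t / (t + s)) x ≤ 1 / (x + s) := by
  rw [(hasDerivAt_mul_id_div_add_const hg.hasDerivAt hxs.ne').deriv,
    div_le_div_iff₀ (by positivity) hxs]
  have hg'x : deriv g x * (x + s) ≤ 1 := (le_div_iff₀ hxs).mp hg'
  have hgs : g x * s ≤ s := mul_le_of_le_one_left hs hg1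
  nlinarith [mul_le_mul_of_nonneg_left hg'x hx]

theorem stmt_6_general (N : ℕ) (i : Fin N) (c : Fin N → ℝ) (hc : ∀ j, 0 < c j)
    (f : ℝ → ℝ) (hf : DifferentiableAt ℝ f (c i))
    (hf'1 : deriv f (c i) ≤ 1 / (∑ j, c j))
    (hf1 : f (c i) ≤ 1)
    (p : ℝ → ℝ) (hp : ∀ t, p t = f t * t / (t + ∑ j ∈ univ.erase i, c j)) :
    deriv p (c i) ≤ 1 / (∑ j, c j) := by
  have hS : 0 ≤ ∑ j ∈ univ.erase i, c j := sum_nonneg fun j _ => (hc j).le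
  have htot : ∑ j, c j = c i + ∑ j ∈ univ.erase i, c j :=
    (add_sum_erase univ c (mem_univ i)).symm
  rw [htot] at hf'1 ⊢
  rw [funext hp]
  exact deriv_mul_id_div_add_const_le hf (hc i).le hS (by linarith [hc i]) hf'1 hf1

/-- Lemma 1, second part: if `0 ≤ f' (c i) ≤ 1 / c_tot` and `0 ≤ f (c i) ≤ 1`, then
`p_i t = f t * t / (t + ∑_{j ≠ i} c j)` has derivative at most `1 / c_tot` at `c i`. -/
theorem stmt_6 (N : ℕ) (hN : 1 ≤ N) (i : Fin N) (c : Fin N → ℝ) (hc : ∀ j, 0 < c j)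
    (f : ℝ → ℝ) (hf : DifferentiableAt ℝ f (c i))
    (hf'0 : 0 ≤ deriv f (c i)) (hf'1 : deriv f (c i) ≤ 1 / (∑ j, c j))
    (hf0 : 0 ≤ f (c i)) (hf1 : f (c i) ≤ 1)
    (p : ℝ → ℝ) (hp : ∀ t, p t = f t * t / (t + ∑ j ∈ univ.erase i, c j)) :
    deriv p (c i) ≤ 1 / (∑ j, c j) :=
  stmt_6_general N i c hc f hf hf'1 hf1 p hp
end

section
/- Fix N ≥ 1, distinct indices i ≠ j, and a cost profile c ∈ ℝ^N with c_m > 0 for all m; let c_tot = Σ_m c_m. Suppose f(t) denotes the value of the allocation function when the i-th coordinate is t and the others are fixed, f is differentiable at c_i, f'(c_i) ≥ 0, and 0 ≤ f(c_i) ≤ 1. Define p_j(t) = f(t) · c_j / (t + Σ_{m≠i} c_m). Then p_j'(c_i) ≥ −c_j / c_tot². -/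
/-!
By the quotient rule, `p_j' = c_j (f' · T - f) / T²` with `T = t + Σ_{m≠i} c_m`, which equals
`c_tot` at `t = c_i`. The term `f' · T` is nonnegative and `f ≤ 1`, so the numerator is at least
`-c_j`.
-/

open Finset

theorem HasDerivAt.mul_const_div_add_const {f : ℝ → ℝ} {f' x : ℝ} (hf : HasDerivAt f f' x)
    (a s : ℝ) (hxs : x + s ≠ 0) :
    HasDerivAt (fun t => f t * a / (t + s)) (a * (f' * (x + s) - f x) / (x + s) ^ 2) x := by
  exact ((hf.mul_const a).div ((hasDerivAt_id' x).add_const s) hxs).congr_deriv (by ring)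

theorem neg_div_sq_le_deriv_mul_const_div_add_const {f : ℝ → ℝ} {x a s : ℝ}
    (hf : DifferentiableAt ℝ f x) (hf' : 0 ≤ deriv f x) (hf1 : f x ≤ 1) (ha : 0 ≤ a)
    (hxs : 0 < x + s) :
    -a / (x + s) ^ 2 ≤ deriv (fun t => f t * a / (t + s)) x := by
  rw [(hf.hasDerivAt.mul_const_div_add_const a s hxs.ne').deriv]
  gcongr
  have hslope : 0 ≤ a * (deriv f x * (x + s)) := by positivity
  have hvalue : a * f x ≤ a := mul_le_of_le_one_right ha hf1
  linarith

theorem stmt_8_general (N : ℕ) (i j : Fin N)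
    (c : Fin N → ℝ) (hc : ∀ m, 0 < c m)
    (f : ℝ → ℝ) (hf : DifferentiableAt ℝ f (c i))
    (hf' : 0 ≤ deriv f (c i)) (hf1 : f (c i) ≤ 1)
    (p : ℝ → ℝ) (hp : ∀ t, p t = f t * c j / (t + ∑ m ∈ univ.erase i, c m)) :
    -(c j) / (∑ m, c m) ^ 2 ≤ deriv p (c i) := by
  have hrest : 0 ≤ ∑ m ∈ univ.erase i, c m := sum_nonneg fun m _ => (hc m).le
  rw [funext hp, ← add_sum_erase univ c (mem_univ i)]
  exact neg_div_sq_le_deriv_mul_const_div_add_const hf hf' hf1 (hc j).le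
    (add_pos_of_pos_of_nonneg (hc i) hrest)

/-- Lemma 2: if `f' (c i) ≥ 0` and `0 ≤ f (c i) ≤ 1`, then the derivative of
`p_j t = f t * c j / (t + ∑_{m ≠ i} c m)` with respect to miner `i`'s cost is bounded
below by `-c j / c_tot ^ 2`. -/
theorem stmt_8 (N : ℕ) (hN : 1 ≤ N) (i j : Fin N) (hij : i ≠ j)
    (c : Fin N → ℝ) (hc : ∀ m, 0 < c m)
    (f : ℝ → ℝ) (hf : DifferentiableAt ℝ f (c i))
    (hf' : 0 ≤ deriv f (c i)) (hf0 : 0 ≤ f (c i)) (hf1 : f (c i) ≤ 1)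
    (p : ℝ → ℝ) (hp : ∀ t, p t = f t * c j / (t + ∑ m ∈ univ.erase i, c m)) :
    -(c j) / (∑ m, c m) ^ 2 ≤ deriv p (c i) :=
  stmt_8_general N i j c hc f hf hf' hf1 p hp
end

section
/- Let N ≥ 1 and K ≥ 1 be integers, fix an index i, and let c ∈ ℝ^N have c_m > 0 for all m with c_tot = Σ_m c_m. Let 0 < f < 1 and suppose p_i = f · c_i / c_tot and, for j ≠ i, 0 < p_j ≤ f. Let d_i, d_j (j ≠ i) be real numbers with 0 ≤ d_i ≤ 1/c_tot and d_j ≥ −c_i / c_tot² for all j ≠ i. Then (1/p_i − (K−1)/(1 − p_i)) · d_i − K · Σ_{j≠i} d_j / (1 − p_j) ≤ 1/(c_i · f · (1 − f)) + K · c_i · (N−1) / ((1 − f) · c_tot²). -/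
open Finset

/-! The own term is at most `d i / p i ≤ c_tot⁻¹ / p i = 1 / (f c i)`, since the correction
`(K - 1) / (1 - p i)` is nonnegative.  Each cross term satisfies
`d j / (1 - p j) ≥ -(c i / c_tot²) / (1 - f)` because `1 - p j ≥ 1 - f > 0`, and there are
`N - 1` of them. -/

lemma one_div_sub_div_one_sub_mul_le {p d K : ℝ} (hp1 : p < 1) (hK : 1 ≤ K)
    (hd : 0 ≤ d) : (1 / p - (K - 1) / (1 - p)) * d ≤ d / p := by
  have hcorr : 0 ≤ (K - 1) / (1 - p) := div_nonneg (by linarith) (by linarith)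
  calc (1 / p - (K - 1) / (1 - p)) * d ≤ 1 / p * d :=
        mul_le_mul_of_nonneg_right (by linarith) hd
    _ = d / p := by ring

lemma div_share_le_one_div {d f c S : ℝ} (hf : 0 < f) (hc : 0 < c) (hS : 0 < S)
    (hd : d ≤ 1 / S) : d / (f * c / S) ≤ 1 / (f * c) := by
  rw [div_div_eq_mul_div, div_le_div_iff_of_pos_right (by positivity)]
  calc d * S ≤ 1 / S * S := mul_le_mul_of_nonneg_right hd hS.le
    _ = 1 := one_div_mul_cancel hS.ne'

lemma neg_div_one_sub_le_div_one_sub {a d p f : ℝ} (ha : 0 ≤ a) (hd : -a ≤ d) (hpf : p ≤ f)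
    (hf1 : f < 1) : -a / (1 - f) ≤ d / (1 - p) := by
  have hf : 0 < 1 - f := by linarith
  calc -a / (1 - f) ≤ -a / (1 - p) := by
        rw [neg_div, neg_div, neg_le_neg_iff]
        exact div_le_div_of_nonneg_left ha hf (by linarith)
    _ ≤ d / (1 - p) := div_le_div_of_nonneg_right hd (by linarith)

theorem stmt_10_general (N K : ℕ) (hK : 1 ≤ K) (i : Fin N)
    (c : Fin N → ℝ) (hc : ∀ m, 0 < c m)
    (f : ℝ) (hf0 : 0 < f) (hf1 : f < 1)
    (p : Fin N → ℝ) (hpi : p i = f * c i / (∑ m, c m))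
    (hpj : ∀ j, j ≠ i → 0 < p j ∧ p j ≤ f)
    (d : Fin N → ℝ) (hdi0 : 0 ≤ d i) (hdi1 : d i ≤ 1 / (∑ m, c m))
    (hdj : ∀ j, j ≠ i → -(c i) / (∑ m, c m) ^ 2 ≤ d j) :
    (1 / p i - ((K : ℝ) - 1) / (1 - p i)) * d i
        - (K : ℝ) * ∑ j ∈ univ.erase i, d j / (1 - p j)
      ≤ 1 / (c i * f * (1 - f))
        + (K : ℝ) * c i * ((N : ℝ) - 1) / ((1 - f) * (∑ m, c m) ^ 2) := by
  set S := ∑ m, c m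
  have hS : 0 < S := sum_pos (fun m _ => hc m) ⟨i, mem_univ i⟩
  have hci := hc i
  have hf : 0 < 1 - f := by linarith
  have hpi1 : p i < 1 := by
    rw [hpi, div_lt_one hS]
    nlinarith [single_le_sum (fun m _ => (hc m).le) (mem_univ i) (f := c)]
  have hown : (1 / p i - ((K : ℝ) - 1) / (1 - p i)) * d i ≤ 1 / (c i * f * (1 - f)) :=
    calc _ ≤ d i / p i := one_div_sub_div_one_sub_mul_le hpi1 (by exact_mod_cast hK) hdi0
      _ ≤ 1 / (f * c i) := hpi ▸ div_share_le_one_div hf0 hci hS hdi1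
      _ ≤ 1 / (c i * f * (1 - f)) :=
        one_div_le_one_div_of_le (by positivity) (by nlinarith [mul_pos hci hf0])
  have hcross : ((N : ℝ) - 1) * (-(c i / S ^ 2) / (1 - f))
      ≤ ∑ j ∈ univ.erase i, d j / (1 - p j) := by
    have := card_nsmul_le_sum (univ.erase i) (fun j => d j / (1 - p j)) _
      fun j hj => neg_div_one_sub_le_div_one_sub (by positivity)
        (neg_div _ (c i) ▸ hdj j (ne_of_mem_erase hj)) (hpj j (ne_of_mem_erase hj)).2 hf1
    rwa [nsmul_eq_mul, card_erase_of_mem (mem_univ i), card_univ, Fintype.card_fin,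
      Nat.cast_pred i.pos] at this
  have hK0 : (0 : ℝ) ≤ K := K.cast_nonneg
  have hscaled := mul_le_mul_of_nonneg_left hcross hK0
  have hrhs : (K : ℝ) * c i * ((N : ℝ) - 1) / ((1 - f) * S ^ 2)
      = -((K : ℝ) * (((N : ℝ) - 1) * (-(c i / S ^ 2) / (1 - f)))) := by
    field_simp
  linarith

/-- Key upper bound in the proof of the main theorem: with `p i = f * c i / c_tot`,
`0 < p j ≤ f` for `j ≠ i`, `0 ≤ d i ≤ 1 / c_tot` and `d j ≥ -c i / c_tot ^ 2` for `j ≠ i`,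
the logarithmic derivative expression is at most
`1 / (c i * f * (1 - f)) + K * c i * (N - 1) / ((1 - f) * c_tot ^ 2)`. -/
theorem stmt_10 (N K : ℕ) (hN : 1 ≤ N) (hK : 1 ≤ K) (i : Fin N)
    (c : Fin N → ℝ) (hc : ∀ m, 0 < c m)
    (f : ℝ) (hf0 : 0 < f) (hf1 : f < 1)
    (p : Fin N → ℝ) (hpi : p i = f * c i / (∑ m, c m))
    (hpj : ∀ j, j ≠ i → 0 < p j ∧ p j ≤ f)
    (d : Fin N → ℝ) (hdi0 : 0 ≤ d i) (hdi1 : d i ≤ 1 / (∑ m, c m))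
    (hdj : ∀ j, j ≠ i → -(c i) / (∑ m, c m) ^ 2 ≤ d j) :
    (1 / p i - ((K : ℝ) - 1) / (1 - p i)) * d i
        - (K : ℝ) * ∑ j ∈ univ.erase i, d j / (1 - p j)
      ≤ 1 / (c i * f * (1 - f))
        + (K : ℝ) * c i * ((N : ℝ) - 1) / ((1 - f) * (∑ m, c m) ^ 2) :=
  stmt_10_general N K hK i c hc f hf0 hf1 p hpi hpj d hdi0 hdi1 hdj
end
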